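/- Let X be a continuous adapted ℝ^D-valued process on a filtered probability space satisfying the usual conditions. Then the following are equivalent: (i) X is free of simple arbitrage on finite time horizons; (ii) X satisfies two-way crossing (TWC) at bounded stopping times, and for every T > 0 the condition (NOA) on [0,T] holds, namely: for every [0,T]-valued stopping time σ with P(σ < T) > 0, every ε > 0, and every 𝓕_σ-measurable direction H, one has P({σ < T} ∩ {sup_{t∈[σ,T]} H(X_t − X_σ) < ε}) > 0. -/

import Mathlib

/-!
Write `Z t = ⟪H, X t - X σ⟫` for the gain of holding a direction `H` from a stopping time `σ`
on. All trading times below are first entry times of `Z` into open sets, which are stopping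
times because `X` is continuous and the filtration is right-continuous.

If (NOA) fails at `σ`, selling at the first time `Z` exceeds `ε / 2` (or at `T`) is an
arbitrage. If (TWC) fails, then with positive probability `Z` becomes positive without having
been negative before; buying when `Z` first leaves `0` upwards and selling when it reaches a
small level `c` or turns negative is then an arbitrage.

Conversely, by induction on the number of trading dates it suffices to show that an a.s.
nonnegative one-period gain `⟪φ, X τ - X σ⟫` vanishes a.s. Normalise `φ` to a direction `H`.
Applying (NOA) at the first time `Z` drops below `-ε` shows that `Z ≥ 0` on `[σ, τ]` a.s., and
then (TWC) forbids `Z τ > 0`.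
-/

open MeasureTheory ProbabilityTheory Filter Set
open scoped ENNReal NNReal RealInnerProductSpace

namespace SimpleArbitrage

variable {Ω : Type*} {mΩ : MeasurableSpace Ω}
variable {E : Type*} [NormedAddCommGroup E] [InnerProductSpace ℝ E] [MeasurableSpace E]

/-- The filtered probability space satisfies the usual conditions: the filtration is
right-continuous and contains all `P`-null sets. -/
def UsualConditions (F : Filtration ℝ mΩ) (P : Measure Ω) : Prop :=
  (∀ t : ℝ, (F t : MeasurableSpace Ω) = ⨅ s : Ioi t, F (s : ℝ)) ∧
  ∀ t : ℝ, ∀ N : Set Ω, P N = 0 → MeasurableSet[F t] N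

/-- A (possibly infinite, extended-real-valued) stopping time. -/
def IsStoppingTimeE (F : Filtration ℝ mΩ) (σ : Ω → EReal) : Prop :=
  ∀ t : ℝ, MeasurableSet[F t] {ω | σ ω ≤ (t : EReal)}

/-- `H` is `𝓕_σ`-measurable, where `σ` is a (possibly infinite) stopping time. -/
def MeasurableAtTime (F : Filtration ℝ mΩ) (σ : Ω → EReal) {α : Type*} [MeasurableSpace α]
    (H : Ω → α) : Prop :=
  ∀ B : Set α, MeasurableSet B → ∀ t : ℝ, MeasurableSet[F t] (H ⁻¹' B ∩ {ω | σ ω ≤ (t : EReal)})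

/-- An `𝓕_σ`-measurable direction: an `𝓕_σ`-measurable random vector of norm one. -/
def IsDirection (F : Filtration ℝ mΩ) (P : Measure Ω) (σ : Ω → EReal) (H : Ω → E) : Prop :=
  MeasurableAtTime F σ H ∧ ∀ᵐ ω ∂P, ‖H ω‖ = 1

/-- The no obvious arbitrage (NOA) condition: for every a.s. possibly finite stopping time `σ`
with `P(σ < ∞) > 0`, every `𝓕_σ`-measurable direction `H` and every `ε > 0`,
`P({σ < ∞} ∩ {sup_{t ∈ [σ,∞)} ⟪H, X t - X σ⟫ < ε}) > 0`. -/
def NOA (F : Filtration ℝ mΩ) (P : Measure Ω) (X : ℝ → Ω → E) : Prop :=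
  ∀ σ : Ω → EReal, IsStoppingTimeE F σ → (∀ ω, 0 ≤ σ ω) → 0 < P {ω | σ ω < ⊤} →
    ∀ H : Ω → E, IsDirection F P σ H → ∀ ε : ℝ, 0 < ε →
      0 < P ({ω | σ ω < ⊤} ∩
        {ω | ∃ δ : ℝ, δ < ε ∧ ∀ t : ℝ, σ ω ≤ (t : EReal) →
          ⟪H ω, X t ω - X (σ ω).toReal ω⟫ ≤ δ})

/-- A simple strategy: trading at finitely many a.s. finite stopping times
`0 = τ_0 ≤ τ_1 ≤ ⋯ ≤ τ_n`, holding the `𝓕_{τ_j}`-measurable portfolio `φ_j` on `(τ_j, τ_{j+1}]`. -/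
structure SimpleStrategy (F : Filtration ℝ mΩ) (E : Type*) [MeasurableSpace E] where
  n : ℕ
  τ : ℕ → Ω → ℝ
  φ : ℕ → Ω → E
  τ_zero : ∀ ω, τ 0 ω = 0
  τ_mono : ∀ j, j < n → ∀ ω, τ j ω ≤ τ (j + 1) ω
  τ_stopping : ∀ j, j ≤ n → IsStoppingTime F (fun ω => (τ j ω : WithTop ℝ))
  φ_meas : ∀ j, j < n → MeasurableAtTime F (fun ω => ((τ j ω : ℝ) : EReal)) (φ j)

/-- The wealth process `V_t(Φ;0)` of a simple strategy from initial capital `0`. -/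
noncomputable def wealth {F : Filtration ℝ mΩ} (X : ℝ → Ω → E) (Φ : SimpleStrategy F E)
    (t : ℝ) (ω : Ω) : ℝ :=
  ∑ j ∈ Finset.range Φ.n,
    ⟪Φ.φ j ω, X (min t (Φ.τ (j + 1) ω)) ω - X (min t (Φ.τ j ω)) ω⟫

/-- The terminal wealth `V_∞(Φ;0) = lim_{t → ∞} V_t(Φ;0)` of a simple strategy. -/
noncomputable def wealthEnd {F : Filtration ℝ mΩ} (X : ℝ → Ω → E) (Φ : SimpleStrategy F E)
    (ω : Ω) : ℝ :=
  ∑ j ∈ Finset.range Φ.n, ⟪Φ.φ j ω, X (Φ.τ (j + 1) ω) ω - X (Φ.τ j ω) ω⟫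

/-- `Φ` is an arbitrage: `V_∞(Φ;0) ≥ 0` a.s. and `P(V_∞(Φ;0) > 0) > 0`. -/
def IsArbitrage {F : Filtration ℝ mΩ} (P : Measure Ω) (X : ℝ → Ω → E)
    (Φ : SimpleStrategy F E) : Prop :=
  (∀ᵐ ω ∂P, 0 ≤ wealthEnd X Φ ω) ∧ 0 < P {ω | 0 < wealthEnd X Φ ω}

/-- `Φ` is `c`-admissible: `inf_{t ∈ [0,∞)} V_t(Φ;0) ≥ -c` a.s. -/
def IsAdmissible {F : Filtration ℝ mΩ} (P : Measure Ω) (X : ℝ → Ω → E)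
    (Φ : SimpleStrategy F E) (c : ℝ) : Prop :=
  ∀ᵐ ω ∂P, ∀ t : ℝ, 0 ≤ t → -c ≤ wealth X Φ t ω

/-- The model `X` is free of arbitrage with simple strategies. -/
def NoSimpleArbitrage (F : Filtration ℝ mΩ) (P : Measure Ω) (X : ℝ → Ω → E) : Prop :=
  ∀ Φ : SimpleStrategy F E, ¬ IsArbitrage P X Φ

/-- Wealth process of the two-stopping-time strategy `H 1_{(σ,τ]}`. -/
noncomputable def pairWealth (X : ℝ → Ω → E) (H : Ω → E) (σ τ : Ω → ℝ) (t : ℝ) (ω : Ω) : ℝ :=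
  ⟪H ω, X (min t (τ ω)) ω - X (min t (σ ω)) ω⟫

/-- There is a `0`-admissible arbitrage of the form `H 1_{(σ,τ]}` with bounded stopping
times `σ ≤ τ` and an `𝓕_σ`-measurable direction `H`. -/
def ExistsAdmissiblePairArbitrage (F : Filtration ℝ mΩ) (P : Measure Ω)
    (X : ℝ → Ω → E) : Prop :=
  ∃ (σ τ : Ω → ℝ) (H : Ω → E),
    IsStoppingTime F (fun ω => (σ ω : WithTop ℝ)) ∧ IsStoppingTime F (fun ω => (τ ω : WithTop ℝ)) ∧ (∀ ω, 0 ≤ σ ω) ∧ (∀ ω, σ ω ≤ τ ω) ∧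
    (∃ K : ℝ, ∀ ω, τ ω ≤ K) ∧
    IsDirection F P (fun ω => ((σ ω : ℝ) : EReal)) H ∧
    (∀ᵐ ω ∂P, ∀ t : ℝ, 0 ≤ t → 0 ≤ pairWealth X H σ τ t ω) ∧
    (∀ᵐ ω ∂P, 0 ≤ ⟪H ω, X (τ ω) ω - X (σ ω) ω⟫) ∧
    0 < P {ω | 0 < ⟪H ω, X (τ ω) ω - X (σ ω) ω⟫}

/-- `σ_H = inf { t ≥ σ : ⟪H, X t - X σ⟫ > 0 }`, as an extended real number (`⊤` if no such
time exists). -/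
noncomputable def hittingAfter (X : ℝ → Ω → E) (σ : Ω → EReal) (H : Ω → E) (ω : Ω) : EReal :=
  sInf {u : EReal | ∃ t : ℝ, u = (t : EReal) ∧ σ ω ≤ (t : EReal) ∧
    0 < ⟪H ω, X t ω - X (σ ω).toReal ω⟫}

/-- Two-way crossing at the stopping time `σ` along the direction `H`: `σ_H = σ_{-H}` a.s. -/
def TWCAt (P : Measure Ω) (X : ℝ → Ω → E) (σ : Ω → EReal) (H : Ω → E) : Prop :=
  ∀ᵐ ω ∂P, hittingAfter X σ H ω = hittingAfter X σ (fun ω' => -H ω') ω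

/-- Two-way crossing (TWC) at bounded stopping times. -/
def TWCBounded (F : Filtration ℝ mΩ) (P : Measure Ω) (X : ℝ → Ω → E) : Prop :=
  ∀ σ : Ω → ℝ, IsStoppingTime F (fun ω => (σ ω : WithTop ℝ)) → (∀ ω, 0 ≤ σ ω) → (∃ K : ℝ, ∀ ω, σ ω ≤ K) →
    ∀ H : Ω → E, IsDirection F P (fun ω => ((σ ω : ℝ) : EReal)) H →
      TWCAt P X (fun ω => ((σ ω : ℝ) : EReal)) H

/-- Two-way crossing (TWC) at a.s. finite stopping times. -/
def TWCFinite (F : Filtration ℝ mΩ) (P : Measure Ω) (X : ℝ → Ω → E) : Prop :=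
  ∀ σ : Ω → EReal, IsStoppingTimeE F σ → (∀ ω, 0 ≤ σ ω) → (∀ᵐ ω ∂P, σ ω < ⊤) →
    ∀ H : Ω → E, IsDirection F P σ H → TWCAt P X σ H

/-- A process is adapted to the filtration (on the relevant time interval `[0,∞)`). -/
def AdaptedProc {β : Type*} [TopologicalSpace β] (F : Filtration ℝ mΩ) (X : ℝ → Ω → β) : Prop :=
  ∀ t : ℝ, 0 ≤ t → StronglyMeasurable[F t] (X t)

/-- Right-continuity of paths. -/
def RightContinuousPaths {β : Type*} [TopologicalSpace β] (X : ℝ → Ω → β) : Prop :=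
  ∀ ω, ∀ t : ℝ, ContinuousWithinAt (fun s => X s ω) (Ici t) t

/-- Continuity of paths. -/
def ContinuousPaths {β : Type*} [TopologicalSpace β] (X : ℝ → Ω → β) : Prop :=
  ∀ ω, Continuous fun t => X t ω

/-- `M` is a martingale on the time interval `[0,∞)`. -/
def MartingaleOn [CompleteSpace E] (F : Filtration ℝ mΩ) (P : Measure Ω)
    (M : ℝ → Ω → E) : Prop :=
  (∀ t : ℝ, 0 ≤ t → StronglyMeasurable[F t] (M t)) ∧
  (∀ t : ℝ, 0 ≤ t → Integrable (M t) P) ∧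
  ∀ s t : ℝ, 0 ≤ s → s ≤ t → P[M t|F s] =ᵐ[P] M s

/-- `M` is a local martingale on `[0,∞)`: there is a localizing sequence of finite stopping
times increasing a.s. to `∞` such that each stopped process is a martingale. -/
def IsLocalMartingale [CompleteSpace E] (F : Filtration ℝ mΩ) (P : Measure Ω)
    (M : ℝ → Ω → E) : Prop :=
  ∃ τ : ℕ → Ω → ℝ, (∀ n, IsStoppingTime F (fun ω => (τ n ω : WithTop ℝ))) ∧ (∀ n ω, 0 ≤ τ n ω) ∧
    (∀ n ω, τ n ω ≤ τ (n + 1) ω) ∧ (∀ᵐ ω ∂P, Tendsto (fun n => τ n ω) atTop atTop) ∧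
    ∀ n, MartingaleOn F P fun t ω => M (min t (τ n ω)) ω

/-- `Z` is `a`-Hölder continuous on compacts: for each `K ∈ ℕ` there is a positive random
variable `C_K` with `‖Z t - Z s‖ ≤ C_K (t-s)^a` for `0 ≤ s ≤ t ≤ K`. -/
def HolderOnCompacts {β : Type*} [NormedAddCommGroup β] (Z : ℝ → Ω → β) (a : ℝ) : Prop :=
  ∀ K : ℕ, ∃ C : Ω → ℝ, (∀ ω, 0 < C ω) ∧
    ∀ ω, ∀ s t : ℝ, 0 ≤ s → s ≤ t → t ≤ (K : ℝ) → ‖Z t ω - Z s ω‖ ≤ C ω * (t - s) ^ a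

/-- The σ-algebra generated by a process (on the time interval `[0,∞)`). -/
def processSigma {α : Type*} [MeasurableSpace α] (X : ℝ → Ω → α) : MeasurableSpace Ω :=
  ⨆ t : Ici (0 : ℝ), MeasurableSpace.comap (X (t : ℝ)) inferInstance

/-- The processes `X` and `Y` are independent. -/
def IndepProcesses {α β : Type*} [MeasurableSpace α] [MeasurableSpace β]
    (P : Measure Ω) (X : ℝ → Ω → α) (Y : ℝ → Ω → β) : Prop :=
  Indep (processSigma X) (processSigma Y) P

/-- `W` is a one-dimensional `(𝓕_t)`-Brownian motion. -/
def IsBrownianMotion (F : Filtration ℝ mΩ) (P : Measure Ω) (W : ℝ → Ω → ℝ) : Prop :=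
  AdaptedProc F W ∧ (∀ ω, W 0 ω = 0) ∧ (∀ ω, Continuous fun t => W t ω) ∧
  ∀ s t : ℝ, 0 ≤ s → s ≤ t →
    Indep (F s) (MeasurableSpace.comap (fun ω => W t ω - W s ω) inferInstance) P ∧
    Measure.map (fun ω => W t ω - W s ω) P = gaussianReal 0 (Real.toNNReal (t - s))

/-- `(W, B)` is a two-dimensional `(𝓕_t)`-Brownian motion. -/
def IsTwoDimBM (F : Filtration ℝ mΩ) (P : Measure Ω) (W B : ℝ → Ω → ℝ) : Prop :=
  IsBrownianMotion F P W ∧ IsBrownianMotion F P B ∧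
  ∀ s t : ℝ, 0 ≤ s → s ≤ t →
    Indep (F s)
      (MeasurableSpace.comap (fun ω => (W t ω - W s ω, B t ω - B s ω)) inferInstance) P ∧
    IndepFun (fun ω => W t ω - W s ω) (fun ω => B t ω - B s ω) P

/-- `W` is an `N`-dimensional `(𝓕_t)`-Brownian motion. -/
def IsMultiBM {N : ℕ} (F : Filtration ℝ mΩ) (P : Measure Ω)
    (W : ℝ → Ω → EuclideanSpace ℝ (Fin N)) : Prop :=
  AdaptedProc F W ∧ (∀ ω, W 0 ω = 0) ∧ (∀ ω, Continuous fun t => W t ω) ∧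
  ∀ s t : ℝ, 0 ≤ s → s ≤ t →
    Indep (F s) (MeasurableSpace.comap (fun ω => W t ω - W s ω) inferInstance) P ∧
    iIndepFun (fun (i : Fin N) ω => W t ω i - W s ω i) P ∧
    ∀ i : Fin N, Measure.map (fun ω => W t ω i - W s ω i) P
      = gaussianReal 0 (Real.toNNReal (t - s))

/-- The covariance function of fractional Brownian motion with Hurst parameter `Hu`. -/
noncomputable def fbmCov (Hu : ℝ) (s t : ℝ) : ℝ :=
  (|s| ^ (2 * Hu) + |t| ^ (2 * Hu) - |t - s| ^ (2 * Hu)) / 2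

/-- `Z` is a fractional Brownian motion with Hurst parameter `Hu`: a centered Gaussian
process with the fBm covariance, with paths Hölder continuous of any exponent `< Hu`. -/
def IsFractionalBM (P : Measure Ω) (Hu : ℝ) (Z : ℝ → Ω → ℝ) : Prop :=
  (∀ t : ℝ, Measurable (Z t)) ∧ (∀ ω, Z 0 ω = 0) ∧ (∀ ω, Continuous fun t => Z t ω) ∧
  (∀ a : ℝ, 0 < a → a < Hu → HolderOnCompacts Z a) ∧
  ∀ (k : ℕ) (c : Fin k → ℝ) (t : Fin k → ℝ), (∀ i, 0 ≤ t i) →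
    Measure.map (fun ω => ∑ i, c i * Z (t i) ω) P =
      gaussianReal 0 (Real.toNNReal (∑ i, ∑ j, c i * c j * fbmCov Hu (t i) (t j)))

/-- `I` is (a version of) the stochastic integral `∫_0^· h s dB_s`: a continuous adapted
local martingale vanishing at `0`, with quadratic variation `∫_0^· h_s^2 ds` and covariation
`⟨I, B⟩ = ∫_0^· h_s ds` (both encoded via the local martingale characterization). -/
def IsStochIntegral (F : Filtration ℝ mΩ) (P : Measure Ω) (h : ℝ → Ω → ℝ)
    (B I : ℝ → Ω → ℝ) : Prop :=
  (∀ ω, I 0 ω = 0) ∧ ContinuousPaths I ∧ AdaptedProc F I ∧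
  IsLocalMartingale F P I ∧
  IsLocalMartingale F P (fun t ω => I t ω ^ 2 - ∫ s in (0:ℝ)..t, (h s ω) ^ 2) ∧
  IsLocalMartingale F P (fun t ω => I t ω * B t ω - ∫ s in (0:ℝ)..t, h s ω)

/-- The filtration stopped at time `T`, i.e. `t ↦ 𝓕_{t ∧ T}`. -/
def stoppedFiltration (F : Filtration ℝ mΩ) (T : ℝ) : Filtration ℝ mΩ where
  seq t := F (min t T)
  mono' := fun _ _ hst => F.mono (min_le_min hst le_rfl)
  le' t := F.le (min t T)

/-- The model `(X_t, 𝓕_t)` is free of simple arbitrage on finite time horizons: for every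
`T > 0` the stopped model `(X_{t ∧ T}, 𝓕_{t ∧ T})` has no simple arbitrage. -/
def NoSimpleArbitrageFiniteHorizons (F : Filtration ℝ mΩ) (P : Measure Ω)
    (X : ℝ → Ω → E) : Prop :=
  ∀ T : ℝ, 0 < T → NoSimpleArbitrage (stoppedFiltration F T) P (fun t ω => X (min t T) ω)

/-- The no obvious arbitrage condition on the time interval `[0,T]`. -/
def NOAUpTo (F : Filtration ℝ mΩ) (P : Measure Ω) (X : ℝ → Ω → E) (T : ℝ) : Prop :=
  ∀ σ : Ω → ℝ, IsStoppingTime F (fun ω => (σ ω : WithTop ℝ)) → (∀ ω, 0 ≤ σ ω ∧ σ ω ≤ T) → 0 < P {ω | σ ω < T} →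
    ∀ H : Ω → E, IsDirection F P (fun ω => ((σ ω : ℝ) : EReal)) H →
      ∀ ε : ℝ, 0 < ε →
        0 < P ({ω | σ ω < T} ∩
          {ω | ∃ δ : ℝ, δ < ε ∧ ∀ t : ℝ, σ ω ≤ t → t ≤ T →
            ⟪H ω, X t ω - X (σ ω) ω⟫ ≤ δ})

/-- `A` is the quadratic variation `⟨M⟩` of the continuous local martingale `M`:
`A` is continuous, increasing, adapted, starts at `0`, and `M² - A` is a local martingale. -/
def IsQuadVariation (F : Filtration ℝ mΩ) (P : Measure Ω) (M A : ℝ → Ω → ℝ) : Prop :=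
  (∀ ω, A 0 ω = 0) ∧ ContinuousPaths A ∧
  (∀ ω, ∀ s t : ℝ, 0 ≤ s → s ≤ t → A s ω ≤ A t ω) ∧
  AdaptedProc F A ∧
  IsLocalMartingale F P (fun t ω => M t ω * M t ω - A t ω)

/-- `A` is the matrix-valued quadratic variation `⟨M⟩` of the `D`-dimensional continuous
local martingale `M`: symmetric, continuous, adapted, `A_0 = 0` and `M^i M^j - A^{ij}` is a
local martingale for all `i, j`. -/
def IsMatrixQuadVariation {D : ℕ} (F : Filtration ℝ mΩ) (P : Measure Ω)
    (M : ℝ → Ω → EuclideanSpace ℝ (Fin D)) (A : ℝ → Ω → Matrix (Fin D) (Fin D) ℝ) : Prop :=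
  (∀ ω, A 0 ω = 0) ∧ (∀ ω i j, Continuous fun t => A t ω i j) ∧
  (∀ ω t, (A t ω).IsSymm) ∧
  (∀ i j : Fin D, AdaptedProc F (fun t ω => A t ω i j)) ∧
  ∀ i j : Fin D, IsLocalMartingale F P (fun t ω => M t ω i * M t ω j - A t ω i j)

/-- `G` is the augmentation (by `P`-null sets) of the natural filtration of `X`. -/
def IsAugmentedNaturalFiltration {β : Type*} [MeasurableSpace β] (P : Measure Ω)
    (X : ℝ → Ω → β) (G : Filtration ℝ mΩ) : Prop :=
  ∀ t : ℝ, (G t : MeasurableSpace Ω) =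
    (⨆ s : {s : ℝ // 0 ≤ s ∧ s ≤ t}, MeasurableSpace.comap (X s.1) inferInstance) ⊔
      MeasurableSpace.generateFrom {N : Set Ω | P N = 0}


end SimpleArbitrage

namespace SimpleArbitrage

variable {Ω : Type*} {mΩ : MeasurableSpace Ω} {E : Type*} [NormedAddCommGroup E]

section Paths

variable {f : ℝ → ℝ} {O C : Set ℝ} {a b c s t T : ℝ}

theorem mem_of_forall_mem_Ico (hf : Continuous f) (hC : IsClosed C) (hab : a < b)
    (h : ∀ t ∈ Ico a b, f t ∈ C) : f b ∈ C := by
  have hb : b ∈ closure (Ico a b) := by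
    rw [closure_Ico hab.ne]
    exact right_mem_Icc.2 hab.le
  simpa [hC.closure_eq] using map_mem_closure hf hb h

theorem exists_rat_mem_of_mem_open (hf : Continuous f) (hO : IsOpen O) (hs : a ≤ s)
    (hst : s < t) (hfs : f s ∈ O) : ∃ q : ℚ, a ≤ q ∧ (q : ℝ) < t ∧ f q ∈ O := by
  obtain ⟨u, hsu, hu⟩ := exists_Ico_subset_of_mem_nhds
    ((hO.preimage hf).mem_nhds hfs) ⟨t, hst⟩
  obtain ⟨q, hsq, hq⟩ := exists_rat_btwn (lt_min hsu hst)
  exact ⟨q, hs.trans hsq.le, hq.trans_le (min_le_right _ _),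
    hu ⟨hsq.le, hq.trans_le (min_le_left _ _)⟩⟩

/-- The infimum of the times `t ≥ a` with `f t ∈ O`, capped at `b`. -/
noncomputable def firstEntry (f : ℝ → ℝ) (O : Set ℝ) (a b : ℝ) : ℝ :=
  sInf (insert b {t | a ≤ t ∧ f t ∈ O})

theorem bddBelow_insert_entrySet : BddBelow (insert b {t | a ≤ t ∧ f t ∈ O}) :=
  ⟨min a b, by rintro t (rfl | ⟨ht, -⟩) <;> simp [*]⟩

theorem firstEntry_le_right : firstEntry f O a b ≤ b :=
  csInf_le bddBelow_insert_entrySet (mem_insert _ _)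

theorem le_firstEntry (hab : a ≤ b) : a ≤ firstEntry f O a b :=
  le_csInf (insert_nonempty _ _) (by rintro t (rfl | ⟨ht, -⟩) <;> assumption)

theorem firstEntry_le (ht : a ≤ t) (hft : f t ∈ O) : firstEntry f O a b ≤ t :=
  csInf_le bddBelow_insert_entrySet (mem_insert_of_mem _ ⟨ht, hft⟩)

theorem notMem_of_lt_firstEntry (ht : a ≤ t) (hlt : t < firstEntry f O a b) : f t ∉ O :=
  fun hft => (firstEntry_le ht hft).not_gt hlt

theorem firstEntry_lt_iff :
    firstEntry f O a b < t ↔ b < t ∨ ∃ s, a ≤ s ∧ s < t ∧ f s ∈ O := by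
  rw [firstEntry, csInf_lt_iff bddBelow_insert_entrySet (insert_nonempty _ _)]
  simp only [mem_insert_iff, mem_ofPred_eq, exists_eq_or_imp]
  exact or_congr_right (exists_congr fun s => by tauto)

theorem apply_firstEntry_mem_closure (hf : Continuous f) (h : ∃ s, a ≤ s ∧ s ≤ b ∧ f s ∈ O) :
    f (firstEntry f O a b) ∈ closure O := by
  obtain ⟨s, has, hsb, hfs⟩ := h
  set S := {t | a ≤ t ∧ f t ∈ O}
  have hS : S.Nonempty := ⟨s, has, hfs⟩
  have hSb : BddBelow S := ⟨a, fun t ht => ht.1⟩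
  have hentry : firstEntry f O a b = sInf S := by
    rw [firstEntry, csInf_insert hSb hS]
    exact min_eq_right ((csInf_le hSb ⟨has, hfs⟩).trans hsb)
  rw [hentry]
  exact map_mem_closure hf (csInf_mem_closure hS hSb) fun t ht => ht.2

theorem apply_firstEntry_notMem (hf : Continuous f) (hO : IsOpen O) (hab : a ≤ b)
    (ha : f a ∉ O) : f (firstEntry f O a b) ∉ O := by
  rcases (le_firstEntry (f := f) (O := O) hab).eq_or_lt with heq | hlt
  · rwa [← heq]
  · exact mem_of_forall_mem_Ico hf hO.isClosed_compl hlt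
      fun t ht => notMem_of_lt_firstEntry ht.1 ht.2

theorem apply_min_firstEntry_sub_nonneg (hf : Continuous f) (haT : a ≤ T) (hfa : f a ≤ 0) :
    0 ≤ f (min (firstEntry f (Iio 0) a T) (firstEntry f (Ioi c) a T)) - f a := by
  have haγ : a ≤ min (firstEntry f (Iio 0) a T) (firstEntry f (Ioi c) a T) :=
    le_min (le_firstEntry haT) (le_firstEntry haT)
  rcases haγ.eq_or_lt with heq | hlt
  · rw [← heq, sub_self]
  · have hγ := mem_of_forall_mem_Ico hf (isClosed_Ici (a := 0)) hlt fun t ht => mem_Ici.2 <|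
      not_lt.1 (notMem_of_lt_firstEntry (f := f) (O := Iio 0) ht.1
        (ht.2.trans_le (min_le_left _ _)))
    linarith [mem_Ici.1 hγ]

theorem le_apply_min_firstEntry (hf : Continuous f) (hat : a ≤ t) (htT : t ≤ T) (hft : c < f t)
    (hnn : ∀ s ∈ Icc a t, 0 ≤ f s) :
    c ≤ f (min (firstEntry f (Iio 0) a T) (firstEntry f (Ioi c) a T)) := by
  have hup : firstEntry f (Ioi c) a T ≤ firstEntry f (Iio 0) a T := by
    by_contra! h
    obtain h | ⟨s, has, hs, hfs⟩ := firstEntry_lt_iff.1 h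
    · exact h.not_ge firstEntry_le_right
    · exact (hnn s ⟨has, hs.le.trans (firstEntry_le hat hft)⟩).not_gt hfs
  rw [min_eq_right hup]
  simpa [closure_Ioi] using apply_firstEntry_mem_closure (O := Ioi c) hf ⟨t, hat, htT, hft⟩

def LeavesUpward (f : ℝ → ℝ) (a : ℝ) : Prop :=
  ∃ t, a ≤ t ∧ 0 < f t ∧ ∀ s ∈ Icc a t, 0 ≤ f s

end Paths

section StoppingTimes

variable {F : Filtration ℝ mΩ} {σ τ : Ω → ℝ} {β : Type*} [MeasurableSpace β] {T : ℝ}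

theorem isStoppingTime_coe_iff :
    IsStoppingTime F (fun ω => (σ ω : WithTop ℝ)) ↔ ∀ t : ℝ, MeasurableSet[F t] {ω | σ ω ≤ t} := by
  simp only [IsStoppingTime, WithTop.coe_le_coe]

theorem measurableSet_measurableSpace_iff (hσ : IsStoppingTime F fun ω => (σ ω : WithTop ℝ))
    {s : Set Ω} :
    MeasurableSet[hσ.measurableSpace] s ↔ ∀ t : ℝ, MeasurableSet[F t] (s ∩ {ω | σ ω ≤ t}) := by
  simp only [IsStoppingTime.measurableSet, WithTop.coe_le_coe]
  refine ⟨fun h => h.2, fun h => ⟨?_, h⟩⟩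
  have hs : s = ⋃ n : ℕ, s ∩ {ω | σ ω ≤ n} := by
    ext ω
    simpa using fun _ => exists_nat_ge (σ ω)
  rw [hs]
  exact .iUnion fun n => le_iSup (fun t => (F t : MeasurableSpace Ω)) (n : ℝ) _ (h n)

theorem measurableAtTime_iff (hσ : IsStoppingTime F fun ω => (σ ω : WithTop ℝ)) {g : Ω → β} :
    MeasurableAtTime F (fun ω => ((σ ω : ℝ) : EReal)) g ↔ Measurable[hσ.measurableSpace] g := by
  simp only [MeasurableAtTime, EReal.coe_le_coe_iff]
  exact ⟨fun h _ hB => (measurableSet_measurableSpace_iff hσ).2 (h _ hB),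
    fun h _ hB => (measurableSet_measurableSpace_iff hσ).1 (h hB)⟩

theorem measurable_of_forall_eqOn (hσ : IsStoppingTime F fun ω => (σ ω : WithTop ℝ))
    {g : Ω → β} (h : ∀ t : ℝ, ∃ G : Ω → β, Measurable[F t] G ∧ ∀ ω, σ ω ≤ t → g ω = G ω) :
    Measurable[hσ.measurableSpace] g := by
  refine fun B hB => (measurableSet_measurableSpace_iff hσ).2 fun t => ?_
  obtain ⟨G, hG, hgG⟩ := h t
  have hset : g ⁻¹' B ∩ {ω | σ ω ≤ t} = G ⁻¹' B ∩ {ω | σ ω ≤ t} := by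
    ext ω
    simp only [mem_inter_iff, mem_preimage, mem_ofPred_eq]
    exact and_congr_left fun hω => by rw [hgG ω hω]
  rw [hset]
  exact (hG hB).inter (isStoppingTime_coe_iff.1 hσ t)

theorem measurable_ite_le (hσ : IsStoppingTime F fun ω => (σ ω : WithTop ℝ)) {g : Ω → β}
    (hg : Measurable[hσ.measurableSpace] g) (c : β) (t : ℝ) :
    Measurable[F t] fun ω => if σ ω ≤ t then g ω else c := by
  intro B hB
  have hset : (fun ω => if σ ω ≤ t then g ω else c) ⁻¹' B =
      g ⁻¹' B ∩ {ω | σ ω ≤ t} ∪ {_ω | c ∈ B} ∩ {ω | σ ω ≤ t}ᶜ := by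
    ext ω
    by_cases h : σ ω ≤ t <;> simp [h]
  rw [hset]
  exact ((measurableSet_measurableSpace_iff hσ).1 (hg hB) t).union
    ((MeasurableSet.const _).inter (isStoppingTime_coe_iff.1 hσ t).compl)

theorem isStoppingTime_piecewise (hσ : IsStoppingTime F fun ω => (σ ω : WithTop ℝ))
    (hτ : IsStoppingTime F fun ω => (τ ω : WithTop ℝ)) (hστ : ∀ ω, σ ω ≤ τ ω) {A : Set Ω}
    [DecidablePred (· ∈ A)] (hA : MeasurableSet[hσ.measurableSpace] A) :
    IsStoppingTime F fun ω => (A.piecewise σ τ ω : WithTop ℝ) := by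
  rw [isStoppingTime_coe_iff] at hτ ⊢
  intro t
  have hset : {ω | A.piecewise σ τ ω ≤ t} =
      A ∩ {ω | σ ω ≤ t} ∪ {ω | τ ω ≤ t} \ (A ∩ {ω | σ ω ≤ t}) := by
    ext ω
    by_cases hω : ω ∈ A
    · simpa [hω] using fun h => (hστ ω).trans h
    · simp [hω]
  rw [hset]
  have hAt := (measurableSet_measurableSpace_iff hσ).1 hA t
  exact hAt.union ((hτ t).diff hAt)

theorem isStoppingTime_piecewise_lt (hσ : IsStoppingTime F fun ω => (σ ω : WithTop ℝ))
    (hτ : IsStoppingTime F fun ω => (τ ω : WithTop ℝ)) (hσT : ∀ ω, σ ω ≤ T)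
    [DecidablePred (· ∈ {ω | σ ω < τ ω})] :
    IsStoppingTime F fun ω => ({ω | σ ω < τ ω}.piecewise σ (fun _ => T) ω : WithTop ℝ) := by
  refine isStoppingTime_piecewise hσ (isStoppingTime_const F T) hσT ?_
  convert (hτ.measurableSet_stopping_time_le hσ).compl using 1
  ext ω
  simp

theorem isRightContinuous_of_usualConditions {P : Measure Ω} (h : UsualConditions F P) :
    F.IsRightContinuous :=
  ⟨fun t => by rw [Filtration.rightCont_eq, h.1 t, iInf_subtype']; rfl⟩

theorem isStoppingTime_firstEntry [F.IsRightContinuous] {Z : ℝ → Ω → ℝ}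
    (hZ : ∀ ω, Continuous fun t => Z t ω) {O : Set ℝ} (hO : IsOpen O)
    (hZO : ∀ q : ℝ, MeasurableSet[F q] {ω | σ ω ≤ q ∧ Z q ω ∈ O})
    (hτ : IsStoppingTime F fun ω => (τ ω : WithTop ℝ)) :
    IsStoppingTime F fun ω => (firstEntry (fun t => Z t ω) O (σ ω) (τ ω) : WithTop ℝ) := by
  refine isStoppingTime_of_measurableSet_lt_of_isRightContinuous fun t => ?_
  have hset : {ω | (firstEntry (fun t => Z t ω) O (σ ω) (τ ω) : WithTop ℝ) < t} =
      {ω | (τ ω : WithTop ℝ) < t} ∪ ⋃ (q : ℚ) (_ : (q : ℝ) < t), {ω | σ ω ≤ q ∧ Z q ω ∈ O} := by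
    ext ω
    simp only [WithTop.coe_lt_coe, mem_ofPred_eq, mem_union, mem_iUnion, firstEntry_lt_iff]
    refine or_congr_right ⟨fun ⟨s, hs, hst, hZs⟩ => ?_, fun ⟨q, hq, hσq, hZq⟩ => ⟨q, hσq, hq, hZq⟩⟩
    obtain ⟨q, hσq, hqt, hZq⟩ := exists_rat_mem_of_mem_open (hZ ω) hO hs hst hZs
    exact ⟨q, hqt, hσq, hZq⟩
  rw [hset]
  exact (hτ.measurableSet_lt t).union
    (.iUnion fun q => .iUnion fun hq => F.mono hq.le _ (hZO q))

theorem isStoppingTime_stoppedFiltration (hσ : IsStoppingTime F fun ω => (σ ω : WithTop ℝ))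
    (hσT : ∀ ω, σ ω ≤ T) :
    IsStoppingTime (stoppedFiltration F T) fun ω => (σ ω : WithTop ℝ) := by
  refine isStoppingTime_coe_iff.2 fun t => ?_
  change MeasurableSet[F (min t T)] _
  rcases le_total t T with h | h
  · rw [min_eq_left h]
    exact isStoppingTime_coe_iff.1 hσ t
  · rw [show {ω | σ ω ≤ t} = univ from eq_univ_of_forall fun ω => (hσT ω).trans h]
    exact .univ

theorem isStoppingTime_min_of_stoppedFiltration
    (hτ : IsStoppingTime (stoppedFiltration F T) fun ω => (τ ω : WithTop ℝ)) :
    IsStoppingTime F fun ω => ((min (τ ω) T : ℝ) : WithTop ℝ) := by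
  refine isStoppingTime_coe_iff.2 fun t => ?_
  rcases lt_or_ge t T with h | h
  · have hset : {ω | min (τ ω) T ≤ t} = {ω | τ ω ≤ t} := by
      ext ω
      simp [h.not_ge]
    have hτt : MeasurableSet[F (min t T)] {ω | τ ω ≤ t} := isStoppingTime_coe_iff.1 hτ t
    rw [min_eq_left h.le] at hτt
    rwa [hset]
  · rw [show {ω | min (τ ω) T ≤ t} = univ from
      eq_univ_of_forall fun ω => (min_le_right _ T).trans h]
    exact .univ

theorem measurableAtTime_stoppedFiltration (hσ : IsStoppingTime F fun ω => (σ ω : WithTop ℝ))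
    (hσT : ∀ ω, σ ω ≤ T) {g : Ω → β} (hg : Measurable[hσ.measurableSpace] g) :
    MeasurableAtTime (stoppedFiltration F T) (fun ω => ((σ ω : ℝ) : EReal)) g := by
  refine (measurableAtTime_iff (isStoppingTime_stoppedFiltration hσ hσT)).2 fun B hB => ?_
  refine (measurableSet_measurableSpace_iff _).2 fun t => ?_
  have hgB := (measurableSet_measurableSpace_iff hσ).1 (hg hB)
  change MeasurableSet[F (min t T)] _
  rcases le_total t T with h | h
  · rw [min_eq_left h]
    exact hgB t
  · have hσt : {ω | σ ω ≤ t} = {ω | σ ω ≤ T} := by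
      ext ω
      exact ⟨fun _ => hσT ω, fun hω => hω.trans h⟩
    rw [min_eq_right h, hσt]
    exact hgB T

theorem measurable_of_measurableAtTime_stoppedFiltration
    (hτ : IsStoppingTime (stoppedFiltration F T) fun ω => (τ ω : WithTop ℝ)) {g : Ω → β}
    (hg : MeasurableAtTime (stoppedFiltration F T) (fun ω => ((τ ω : ℝ) : EReal)) g) :
    Measurable[(isStoppingTime_min_of_stoppedFiltration hτ).measurableSpace] g := by
  intro B hB
  have hgB := (hτ.measurableSet _).1 ((measurableAtTime_iff hτ).1 hg hB)
  refine (measurableSet_measurableSpace_iff _).2 fun t => ?_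
  rcases lt_or_ge t T with h | h
  · have hset : {ω | min (τ ω) T ≤ t} = {ω | τ ω ≤ t} := by
      ext ω
      simp [h.not_ge]
    have hgt : MeasurableSet[F (min t T)] (g ⁻¹' B ∩ {ω | τ ω ≤ t}) := by
      have := hgB.2 t
      simp only [WithTop.coe_le_coe] at this
      exact this
    rw [hset]
    rwa [min_eq_left h.le] at hgt
  · rw [show {ω | min (τ ω) T ≤ t} = univ from
      eq_univ_of_forall fun ω => (min_le_right _ T).trans h, inter_univ]
    exact iSup_le (fun s => F.mono ((min_le_right s T).trans h)) _ hgB.1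

theorem stronglyMeasurable_apply_min {X : ℝ → Ω → E} (hX : AdaptedProc F X)
    (hC : ContinuousPaths X) (hσ : IsStoppingTime F fun ω => (σ ω : WithTop ℝ)) (hσ0 : ∀ ω, 0 ≤ σ ω) {t : ℝ}
    (ht : 0 ≤ t) : StronglyMeasurable[F t] fun ω => X (min (σ ω) t) ω := by
  -- `X` is only adapted on `[0, ∞)`, so pass to the filtration indexed by `ℝ≥0`, where
  -- continuity gives progressive measurability.
  let G : Filtration ℝ≥0 mΩ := ⟨fun s => F s, fun _ _ h => F.mono h, fun s => F.le s⟩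
  have hadapted : StronglyAdapted G fun (s : ℝ≥0) ω => X s ω := fun s => hX s s.2
  have hprog := hadapted.isStronglyProgressive_of_continuous
    fun ω => (hC ω).comp continuous_subtype_val
  let τ : Ω → ℝ≥0 := fun ω => ⟨min (σ ω) t, le_min (hσ0 ω) ht⟩
  have hτ : IsStoppingTime G fun ω => (τ ω : WithTop ℝ≥0) := by
    intro s
    have hset : {ω | (τ ω : WithTop ℝ≥0) ≤ s} = {ω | σ ω ≤ s} ∪ {_ω | t ≤ s} := by
      ext ω
      simp only [mem_ofPred_eq, mem_union, WithTop.coe_le_coe]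
      rw [← NNReal.coe_le_coe]
      exact min_le_iff
    rw [hset]
    exact (isStoppingTime_coe_iff.1 hσ s).union (.const _)
  exact stronglyMeasurable_stoppedValue_of_le hprog hτ (n := ⟨t, ht⟩)
    fun ω => WithTop.coe_le_coe.2 (min_le_right (σ ω) t)

theorem measurable_apply_stoppingTime [MeasurableSpace E] [BorelSpace E] {X : ℝ → Ω → E}
    (hX : AdaptedProc F X) (hC : ContinuousPaths X) (hσ : IsStoppingTime F fun ω => (σ ω : WithTop ℝ))
    (hσ0 : ∀ ω, 0 ≤ σ ω) : Measurable[hσ.measurableSpace] fun ω => X (σ ω) ω := by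
  refine measurable_of_forall_eqOn hσ fun t => ?_
  rcases le_or_gt 0 t with ht | ht
  · exact ⟨_, (stronglyMeasurable_apply_min hX hC hσ hσ0 ht).measurable,
      fun ω hω => by rw [min_eq_left hω]⟩
  · exact ⟨fun _ => 0, measurable_const, fun ω hω => absurd ((hσ0 ω).trans hω) ht.not_ge⟩

end StoppingTimes

section Gain

variable [InnerProductSpace ℝ E]

def gain (X : ℝ → Ω → E) (σ : Ω → ℝ) (H : Ω → E) (t : ℝ) (ω : Ω) : ℝ :=
  ⟪H ω, X t ω - X (σ ω) ω⟫

variable {F : Filtration ℝ mΩ} {P : Measure Ω} {X : ℝ → Ω → E} {σ ρ : Ω → ℝ} {H : Ω → E}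

theorem continuous_gain (hC : ContinuousPaths X) (ω : Ω) :
    Continuous fun t => gain X σ H t ω :=
  continuous_const.inner ((hC ω).sub continuous_const)

theorem gain_self (ω : Ω) : gain X σ H (σ ω) ω = 0 := by
  simp [gain]

theorem gain_sub_gain (s t : ℝ) (ω : Ω) :
    gain X σ H t ω - gain X σ H s ω = ⟪H ω, X t ω - X s ω⟫ := by
  rw [gain, gain, ← inner_sub_right, sub_sub_sub_cancel_right]

theorem measurableSet_le_and_gain_mem [MeasurableSpace E] [BorelSpace E]
    [SecondCountableTopology E] (hX : AdaptedProc F X) (hC : ContinuousPaths X)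
    (hσ : IsStoppingTime F fun ω => (σ ω : WithTop ℝ)) (hσ0 : ∀ ω, 0 ≤ σ ω)
    (hH : Measurable[hσ.measurableSpace] H) (hρ : IsStoppingTime F fun ω => (ρ ω : WithTop ℝ))
    (hσρ : ∀ ω, σ ω ≤ ρ ω) {O : Set ℝ} (hO : MeasurableSet O) (q : ℝ) :
    MeasurableSet[F q] {ω | ρ ω ≤ q ∧ gain X σ H q ω ∈ O} := by
  rcases lt_or_ge q 0 with hq | hq
  · convert MeasurableSet.empty
    exact eq_empty_of_forall_notMem fun ω hω => ((hσ0 ω).trans (hσρ ω)).not_gt (hω.1.trans_lt hq)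
  · let W : Ω → ℝ := fun ω =>
      ⟪if σ ω ≤ q then H ω else 0, X q ω - if σ ω ≤ q then X (σ ω) ω else 0⟫
    have hW : Measurable[F q] W := (measurable_ite_le hσ hH 0 q).inner
      ((hX q hq).measurable.sub
        (measurable_ite_le hσ (measurable_apply_stoppingTime hX hC hσ hσ0) 0 q))
    have hset : {ω | ρ ω ≤ q ∧ gain X σ H q ω ∈ O} = {ω | ρ ω ≤ q} ∩ W ⁻¹' O := by
      ext ω
      simp only [mem_ofPred_eq, mem_inter_iff, mem_preimage]
      refine and_congr_right fun hρq => ?_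
      simp [W, gain, (hσρ ω).trans hρq]
    rw [hset]
    exact (isStoppingTime_coe_iff.1 hρ q).inter (hW hO)

theorem hittingAfter_lt_hittingAfter_neg_iff (hC : ContinuousPaths X) (ω : Ω) :
    hittingAfter X (fun ω => ((σ ω : ℝ) : EReal)) H ω <
        hittingAfter X (fun ω => ((σ ω : ℝ) : EReal)) (fun ω => -H ω) ω ↔
      LeavesUpward (fun t => gain X σ H t ω) (σ ω) := by
  simp only [hittingAfter, EReal.toReal_coe, EReal.coe_le_coe_iff, inner_neg_left, neg_pos]
  constructor
  · intro h
    obtain ⟨_, ⟨t, rfl, hσt, hpos⟩, hlt⟩ := sInf_lt_iff.1 h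
    refine ⟨t, hσt, hpos, fun s hs => not_lt.1 fun hneg => ?_⟩
    exact lt_irrefl _ ((sInf_le (by exact ⟨s, rfl, hs.1, hneg⟩)).trans_lt
      ((EReal.coe_le_coe_iff.2 hs.2).trans_lt hlt))
  · rintro ⟨t, hσt, hpos, hnn⟩
    -- the gain stays positive on some `[t, v)`, so it cannot turn negative before `v`
    obtain ⟨v, htv, hv⟩ := exists_Ico_subset_of_mem_nhds
      ((isOpen_Ioi.preimage (continuous_gain hC ω)).mem_nhds hpos) ⟨t + 1, by linarith⟩
    refine (sInf_le (by exact ⟨t, rfl, hσt, hpos⟩)).trans_lt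
      ((EReal.coe_lt_coe_iff.2 htv).trans_le (le_sInf ?_))
    rintro _ ⟨s, rfl, hσs, hneg⟩
    refine EReal.coe_le_coe_iff.2 (not_lt.1 fun hsv => ?_)
    rcases le_or_gt s t with hst | hts
    · exact (hnn s ⟨hσs, hst⟩).not_gt hneg
    · exact (mem_Ioi.1 (hv ⟨hts.le, hsv⟩)).not_gt hneg

theorem twcAt_iff (hC : ContinuousPaths X) :
    TWCAt P X (fun ω => ((σ ω : ℝ) : EReal)) H ↔ ∀ᵐ ω ∂P,
      ¬ LeavesUpward (fun t => gain X σ H t ω) (σ ω) ∧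
        ¬ LeavesUpward (fun t => gain X σ (fun ω => -H ω) t ω) (σ ω) := by
  refine eventually_congr (.of_forall fun ω => ?_)
  rw [← hittingAfter_lt_hittingAfter_neg_iff hC, ← hittingAfter_lt_hittingAfter_neg_iff hC]
  simp only [neg_neg]
  exact ⟨fun h => ⟨h.not_lt, h.not_gt⟩, fun h => le_antisymm (not_lt.1 h.2) (not_lt.1 h.1)⟩

end Gain

section Necessity

variable [InnerProductSpace ℝ E] [MeasurableSpace E] {F : Filtration ℝ mΩ} {P : Measure Ω}
  {X : ℝ → Ω → E} {σ τ : Ω → ℝ} {H : Ω → E} {T : ℝ}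

theorem NoSimpleArbitrageFiniteHorizons.measure_inner_pos_eq_zero
    (hNA : NoSimpleArbitrageFiniteHorizons F P X) (hT : 0 < T)
    (hσ : IsStoppingTime F fun ω => (σ ω : WithTop ℝ))
    (hτ : IsStoppingTime F fun ω => (τ ω : WithTop ℝ)) (hσ0 : ∀ ω, 0 ≤ σ ω)
    (hστ : ∀ ω, σ ω ≤ τ ω) (hτT : ∀ ω, τ ω ≤ T) (hH : Measurable[hσ.measurableSpace] H)
    (hnn : ∀ᵐ ω ∂P, 0 ≤ ⟪H ω, X (τ ω) ω - X (σ ω) ω⟫) :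
    P {ω | 0 < ⟪H ω, X (τ ω) ω - X (σ ω) ω⟫} = 0 := by
  have hσT : ∀ ω, σ ω ≤ T := fun ω => (hστ ω).trans (hτT ω)
  have h0 := isStoppingTime_const F (0 : ℝ)
  let Φ : SimpleStrategy (stoppedFiltration F T) E :=
    { n := 2
      τ := fun | 0 => fun _ => 0 | 1 => σ | _ => τ
      φ := fun | 1 => H | _ => fun _ => 0
      τ_zero := fun _ => rfl
      τ_mono := by
        intro j hj ω
        interval_cases j
        exacts [hσ0 ω, hστ ω]
      τ_stopping := by
        intro j hj
        interval_cases j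
        exacts [isStoppingTime_stoppedFiltration h0 fun _ => hT.le,
          isStoppingTime_stoppedFiltration hσ hσT, isStoppingTime_stoppedFiltration hτ hτT]
      φ_meas := by
        intro j hj
        interval_cases j
        exacts [measurableAtTime_stoppedFiltration h0 (fun _ => hT.le) measurable_const,
          measurableAtTime_stoppedFiltration hσ hσT hH] }
  have hΦ : ∀ ω, wealthEnd (fun t ω => X (min t T) ω) Φ ω = ⟪H ω, X (τ ω) ω - X (σ ω) ω⟫ := by
    intro ω
    simp [wealthEnd, Φ, Finset.sum_range_succ, min_eq_left (hτT ω), min_eq_left (hσT ω)]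
  by_contra hpos
  exact hNA T hT Φ ⟨by simpa only [hΦ] using hnn, by simpa only [hΦ] using pos_iff_ne_zero.2 hpos⟩

variable [BorelSpace E] [SecondCountableTopology E] [F.IsRightContinuous]

theorem NoSimpleArbitrageFiniteHorizons.noaUpTo (hNA : NoSimpleArbitrageFiniteHorizons F P X)
    (hX : AdaptedProc F X) (hC : ContinuousPaths X) (hT : 0 < T) : NOAUpTo F P X T := by
  intro σ hσ hσT hPσ H hH ε hε
  have hHm := (measurableAtTime_iff hσ).1 hH.1
  let τ : Ω → ℝ := fun ω => firstEntry (fun t => gain X σ H t ω) (Ioi (ε / 2)) (σ ω) T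
  have hτ : IsStoppingTime F fun ω => (τ ω : WithTop ℝ) :=
    isStoppingTime_firstEntry (continuous_gain hC) isOpen_Ioi
      (measurableSet_le_and_gain_mem hX hC hσ (fun ω => (hσT ω).1) hHm hσ (fun _ => le_rfl)
        measurableSet_Ioi) (isStoppingTime_const F T)
  set S := {ω | σ ω < T} ∩ {ω | ∃ δ : ℝ, δ < ε ∧
    ∀ t : ℝ, σ ω ≤ t → t ≤ T → ⟪H ω, X t ω - X (σ ω) ω⟫ ≤ δ}
  by_contra hS
  have hS0 : P S = 0 := nonpos_iff_eq_zero.1 (not_lt.1 hS)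
  have hgain : ∀ ω ∉ S, 0 ≤ gain X σ H (τ ω) ω ∧ (σ ω < T → 0 < gain X σ H (τ ω) ω) := by
    intro ω hω
    rcases (hσT ω).2.lt_or_eq with hlt | heq
    · have hexists : ∃ t, σ ω ≤ t ∧ t ≤ T ∧ gain X σ H t ω ∈ Ioi (ε / 2) := by
        by_contra! h
        exact hω ⟨hlt, ε / 2, by linarith, fun t h1 h2 => not_lt.1 (h t h1 h2)⟩
      have hτε := apply_firstEntry_mem_closure (continuous_gain hC ω) hexists
      rw [closure_Ioi] at hτε
      have hpos : 0 < gain X σ H (τ ω) ω := by linarith [mem_Ici.1 hτε]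
      exact ⟨hpos.le, fun _ => hpos⟩
    · have hτσ : τ ω = σ ω := le_antisymm (heq ▸ firstEntry_le_right) (le_firstEntry (hσT ω).2)
      exact ⟨by rw [hτσ, gain_self], fun h => absurd heq h.ne⟩
  have hzero := hNA.measure_inner_pos_eq_zero hT hσ hτ (fun ω => (hσT ω).1)
    (fun ω => le_firstEntry (hσT ω).2) (fun _ => firstEntry_le_right) hHm
    (by filter_upwards [measure_eq_zero_iff_ae_notMem.1 hS0] with ω hω using (hgain ω hω).1)
  refine hPσ.ne' (measure_mono_null (fun ω hω => ?_) (measure_union_null hS0 hzero))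
  by_cases h : ω ∈ S
  exacts [Or.inl h, Or.inr ((hgain ω h).2 hω)]

theorem NoSimpleArbitrageFiniteHorizons.measure_rise_eq_zero
    (hNA : NoSimpleArbitrageFiniteHorizons F P X) (hX : AdaptedProc F X) (hC : ContinuousPaths X)
    (hT : 0 < T) (hσ : IsStoppingTime F fun ω => (σ ω : WithTop ℝ)) (hσ0 : ∀ ω, 0 ≤ σ ω)
    (hσT : ∀ ω, σ ω ≤ T) (hH : Measurable[hσ.measurableSpace] H) {c : ℝ} (hc : 0 < c) :
    P {ω | ∃ t, σ ω ≤ t ∧ t ≤ T ∧ c < gain X σ H t ω ∧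
      ∀ s ∈ Icc (σ ω) t, 0 ≤ gain X σ H s ω} = 0 := by
  -- buy when the gain first becomes positive; sell when it reaches `c` or turns negative
  let α : Ω → ℝ := fun ω => firstEntry (fun t => gain X σ H t ω) (Ioi 0) (σ ω) T
  let γ : Ω → ℝ := fun ω => min (firstEntry (fun t => gain X σ H t ω) (Iio 0) (α ω) T)
    (firstEntry (fun t => gain X σ H t ω) (Ioi c) (α ω) T)
  have hσα : ∀ ω, σ ω ≤ α ω := fun ω => le_firstEntry (hσT ω)
  have hαT : ∀ ω, α ω ≤ T := fun _ => firstEntry_le_right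
  have hα : IsStoppingTime F fun ω => (α ω : WithTop ℝ) :=
    isStoppingTime_firstEntry (continuous_gain hC) isOpen_Ioi (measurableSet_le_and_gain_mem
      hX hC hσ hσ0 hH hσ (fun _ => le_rfl) measurableSet_Ioi) (isStoppingTime_const F T)
  have hentry : ∀ O : Set ℝ, IsOpen O → IsStoppingTime F fun ω =>
      (firstEntry (fun t => gain X σ H t ω) O (α ω) T : WithTop ℝ) := fun O hO =>
    isStoppingTime_firstEntry (continuous_gain hC) hO (measurableSet_le_and_gain_mem
      hX hC hσ hσ0 hH hα hσα hO.measurableSet) (isStoppingTime_const F T)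
  have hγ : IsStoppingTime F fun ω => (γ ω : WithTop ℝ) := by
    simpa only [γ, WithTop.coe_min] using (hentry _ isOpen_Iio).min (hentry _ isOpen_Ioi)
  have hfα : ∀ ω, gain X σ H (α ω) ω ≤ 0 := fun ω => not_lt.1 <|
    apply_firstEntry_notMem (continuous_gain hC ω) isOpen_Ioi (hσT ω) (by simp [gain_self])
  have hHα : Measurable[hα.measurableSpace] H :=
    hH.mono (hσ.measurableSpace_mono hα fun ω => WithTop.coe_le_coe.2 (hσα ω)) le_rfl
  have hzero := hNA.measure_inner_pos_eq_zero hT hα hγ (fun ω => (hσ0 ω).trans (hσα ω))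
    (fun ω => le_min (le_firstEntry (hαT ω)) (le_firstEntry (hαT ω)))
    (fun ω => (min_le_left _ _).trans firstEntry_le_right) hHα
    (ae_of_all _ fun ω => by
      rw [← gain_sub_gain (σ := σ)]
      exact apply_min_firstEntry_sub_nonneg (continuous_gain hC ω) (hαT ω) (hfα ω))
  refine measure_mono_null (fun ω ⟨t, hσt, htT, hct, hnn⟩ => ?_) hzero
  have hαt : α ω ≤ t := firstEntry_le hσt (hc.trans hct)
  have hcγ := le_apply_min_firstEntry (continuous_gain hC ω) hαt htT hct
    fun s hs => hnn s ⟨(hσα ω).trans hs.1, hs.2⟩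
  change 0 < ⟪H ω, X (γ ω) ω - X (α ω) ω⟫
  rw [← gain_sub_gain (σ := σ)]
  linarith [hfα ω]

theorem NoSimpleArbitrageFiniteHorizons.ae_not_leavesUpward
    (hNA : NoSimpleArbitrageFiniteHorizons F P X) (hX : AdaptedProc F X) (hC : ContinuousPaths X)
    (hσ : IsStoppingTime F fun ω => (σ ω : WithTop ℝ)) (hσ0 : ∀ ω, 0 ≤ σ ω) {K : ℝ}
    (hσK : ∀ ω, σ ω ≤ K) (hH : Measurable[hσ.measurableSpace] H) :
    ∀ᵐ ω ∂P, ¬ LeavesUpward (fun t => gain X σ H t ω) (σ ω) := by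
  let A : ℕ → ℕ → Set Ω := fun m k => {ω | ∃ t, σ ω ≤ t ∧ t ≤ max (m : ℝ) K + 1 ∧
    1 / ((k : ℝ) + 1) < gain X σ H t ω ∧ ∀ s ∈ Icc (σ ω) t, 0 ≤ gain X σ H s ω}
  have hA : ∀ m k, P (A m k) = 0 := fun m k =>
    hNA.measure_rise_eq_zero hX hC (by positivity) hσ hσ0
      (fun ω => (hσK ω).trans ((le_max_right _ _).trans (le_add_of_nonneg_right zero_le_one)))
      hH (by positivity)
  refine measure_eq_zero_iff_ae_notMem.1 (measure_mono_null ?_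
    (measure_iUnion_null fun m => measure_iUnion_null fun k => hA m k))
  rintro ω ⟨t, hσt, hpos, hnn⟩
  obtain ⟨k, hk⟩ := exists_nat_one_div_lt hpos
  exact mem_iUnion₂.2 ⟨⌈t⌉₊, k, t, hσt,
    (Nat.le_ceil t).trans ((le_max_left _ _).trans (le_add_of_nonneg_right zero_le_one)), hk, hnn⟩

theorem NoSimpleArbitrageFiniteHorizons.twcBounded (hNA : NoSimpleArbitrageFiniteHorizons F P X)
    (hX : AdaptedProc F X) (hC : ContinuousPaths X) : TWCBounded F P X := by
  rintro σ hσ hσ0 ⟨K, hK⟩ H ⟨hH, -⟩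
  have hHm := (measurableAtTime_iff hσ).1 hH
  rw [twcAt_iff hC]
  filter_upwards [hNA.ae_not_leavesUpward hX hC hσ hσ0 hK hHm,
    hNA.ae_not_leavesUpward hX hC hσ hσ0 hK hHm.neg] with ω h1 h2
  exact ⟨h1, h2⟩

end Necessity

section Sufficiency

variable [InnerProductSpace ℝ E] [MeasurableSpace E] [BorelSpace E] [SecondCountableTopology E]
  {F : Filtration ℝ mΩ} {P : Measure Ω} {X : ℝ → Ω → E} {σ ρ : Ω → ℝ} {H : Ω → E} {T : ℝ}

theorem exists_isDirection_inner_eq_mul_gain [Nontrivial E] {τ : Ω → ℝ} {φ : Ω → E}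
    (hσ : IsStoppingTime F fun ω => (σ ω : WithTop ℝ))
    (hτ : IsStoppingTime F fun ω => (τ ω : WithTop ℝ)) (hστ : ∀ ω, σ ω ≤ τ ω)
    (hφ : Measurable[hσ.measurableSpace] φ) :
    ∃ (H : Ω → E) (ρ : Ω → ℝ) (_ : IsStoppingTime F fun ω => (ρ ω : WithTop ℝ)),
      IsDirection F P (fun ω => ((σ ω : ℝ) : EReal)) H ∧ (∀ ω, σ ω ≤ ρ ω ∧ ρ ω ≤ τ ω) ∧
      ∀ ω, ⟪φ ω, X (τ ω) ω - X (σ ω) ω⟫ = ‖φ ω‖ * gain X σ H (ρ ω) ω ∧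
        (φ ω = 0 → ρ ω = σ ω) := by
  classical
  obtain ⟨e, he⟩ := exists_norm_eq E zero_le_one
  let A := {ω | φ ω = 0}
  have hA : MeasurableSet[hσ.measurableSpace] A := hφ (measurableSet_singleton 0)
  refine ⟨A.piecewise (fun _ => e) fun ω => ‖φ ω‖⁻¹ • φ ω, A.piecewise σ τ,
    isStoppingTime_piecewise hσ hτ hστ hA, ⟨(measurableAtTime_iff hσ).2
      (measurable_const.piecewise hA ((measurable_norm.inv.smul measurable_id).comp hφ)),
      ae_of_all _ fun ω => ?_⟩, fun ω => ?_, fun ω => ?_⟩ <;>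
  by_cases hω : ω ∈ A
  · simp [hω, he]
  · simp [hω, norm_smul, inv_mul_cancel₀ (norm_ne_zero_iff.2 hω)]
  · simp [hω, hστ ω]
  · simp [hω, hστ ω]
  · simp [piecewise_eq_of_mem _ _ _ hω, show φ ω = 0 from hω]
  · refine ⟨?_, fun h => absurd h hω⟩
    simp [hω, gain, real_inner_smul_left, ← mul_assoc, mul_inv_cancel₀ (norm_ne_zero_iff.2 hω)]

theorem measurable_sum_inner {n : ℕ} {s : ℕ → Ω → ℝ} {φ : ℕ → Ω → E}
    (hs : ∀ j ≤ n, IsStoppingTime F fun ω => (s j ω : WithTop ℝ))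
    (hmono : ∀ i j, i ≤ j → j ≤ n → ∀ ω, s i ω ≤ s j ω)
    (hφ : ∀ j (hj : j < n), Measurable[(hs j hj.le).measurableSpace] (φ j))
    (hXs : ∀ j (hj : j ≤ n), Measurable[(hs j hj).measurableSpace] fun ω => X (s j ω) ω)
    {j : ℕ} (hj : j ≤ n) : Measurable[(hs j hj).measurableSpace] fun ω =>
      ∑ i ∈ Finset.range j, ⟪φ i ω, X (s (i + 1) ω) ω - X (s i ω) ω⟫ := by
  have hle : ∀ i (hi : i ≤ j), (hs i (hi.trans hj)).measurableSpace ≤ (hs j hj).measurableSpace :=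
    fun i hi => IsStoppingTime.measurableSpace_mono _ _
      fun ω => WithTop.coe_le_coe.2 (hmono i j hi hj ω)
  refine Finset.measurable_sum _ fun i hi => ?_
  have hij : i < j := Finset.mem_range.1 hi
  exact ((hφ i (by omega)).mono (hle i hij.le) le_rfl).inner
    (((hXs (i + 1) (by omega)).mono (hle (i + 1) hij) le_rfl).sub
      ((hXs i (by omega)).mono (hle i hij.le) le_rfl))

theorem ae_sum_inner_eq_zero {n : ℕ} {s : ℕ → Ω → ℝ} {φ : ℕ → Ω → E}
    (hs : ∀ j ≤ n, IsStoppingTime F fun ω => (s j ω : WithTop ℝ))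
    (hmono : ∀ i j, i ≤ j → j ≤ n → ∀ ω, s i ω ≤ s j ω)
    (hφ : ∀ j (hj : j < n), Measurable[(hs j hj.le).measurableSpace] (φ j))
    (hXs : ∀ j (hj : j ≤ n), Measurable[(hs j hj).measurableSpace] fun ω => X (s j ω) ω)
    (hstep : ∀ j (hj : j < n) (ψ : Ω → E), Measurable[(hs j hj.le).measurableSpace] ψ →
      (∀ᵐ ω ∂P, 0 ≤ ⟪ψ ω, X (s (j + 1) ω) ω - X (s j ω) ω⟫) →
      ∀ᵐ ω ∂P, ⟪ψ ω, X (s (j + 1) ω) ω - X (s j ω) ω⟫ = 0) :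
    ∀ j ≤ n, (∀ᵐ ω ∂P, 0 ≤ ∑ i ∈ Finset.range j, ⟪φ i ω, X (s (i + 1) ω) ω - X (s i ω) ω⟫) →
      ∀ᵐ ω ∂P, ∑ i ∈ Finset.range j, ⟪φ i ω, X (s (i + 1) ω) ω - X (s i ω) ω⟫ = 0 := by
  classical
  intro j
  induction j with
  | zero => exact fun _ _ => ae_of_all _ fun _ => rfl
  | succ j ih =>
    intro hj hnn
    set V : Ω → ℝ := fun ω => ∑ i ∈ Finset.range j, ⟪φ i ω, X (s (i + 1) ω) ω - X (s i ω) ω⟫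
    set ξ : Ω → ℝ := fun ω => ⟪φ j ω, X (s (j + 1) ω) ω - X (s j ω) ω⟫
    have hsum : ∀ ω, ∑ i ∈ Finset.range (j + 1), ⟪φ i ω, X (s (i + 1) ω) ω - X (s i ω) ω⟫ =
        V ω + ξ ω := fun ω => Finset.sum_range_succ _ _
    simp only [hsum] at hnn ⊢
    have hV : Measurable[(hs j (by omega)).measurableSpace] V :=
      measurable_sum_inner hs hmono hφ hXs (by omega)
    -- trade `φ j` only where the wealth accumulated so far is not positive
    let A := {ω | V ω ≤ 0}
    have hind := hstep j (by omega) (A.indicator (φ j))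
      ((hφ j (by omega)).indicator (measurableSet_le hV measurable_const)) (by
        filter_upwards [hnn] with ω hω
        by_cases hωA : ω ∈ A
        · simp only [indicator_of_mem hωA]
          linarith [show V ω ≤ 0 from hωA]
        · simp [indicator_of_notMem hωA])
    have hξ : ∀ᵐ ω ∂P, ω ∈ A → ξ ω = 0 := by
      filter_upwards [hind] with ω hω hωA
      simpa [indicator_of_mem hωA] using hω
    have hV0 := ih (by omega) (by
      filter_upwards [hnn, hξ] with ω hω hωξ
      by_cases hωA : ω ∈ A
      · linarith [hωξ hωA]
      · exact (not_le.1 hωA).le)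
    filter_upwards [hV0, hξ] with ω hω hωξ
    have hVω : V ω = 0 := hω
    rw [hVω, hωξ hVω.le, add_zero]

variable [F.IsRightContinuous]

theorem NOAUpTo.measure_firstEntry_lt_eq_zero (hNOA : NOAUpTo F P X T) (hX : AdaptedProc F X)
    (hC : ContinuousPaths X) (hσ : IsStoppingTime F fun ω => (σ ω : WithTop ℝ))
    (hσ0 : ∀ ω, 0 ≤ σ ω) (hρ : IsStoppingTime F fun ω => (ρ ω : WithTop ℝ))
    (hσρ : ∀ ω, σ ω ≤ ρ ω) (hρT : ∀ ω, ρ ω ≤ T)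
    (hH : IsDirection F P (fun ω => ((σ ω : ℝ) : EReal)) H)
    (hρnn : ∀ᵐ ω ∂P, 0 ≤ gain X σ H (ρ ω) ω) {ε : ℝ} (hε : 0 < ε) :
    P {ω | firstEntry (fun t => gain X σ H t ω) (Iio (-ε)) (σ ω) (ρ ω) < ρ ω} = 0 := by
  classical
  have hHm := (measurableAtTime_iff hσ).1 hH.1
  let θ : Ω → ℝ := fun ω => firstEntry (fun t => gain X σ H t ω) (Iio (-ε)) (σ ω) (ρ ω)
  have hθ : IsStoppingTime F fun ω => (θ ω : WithTop ℝ) :=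
    isStoppingTime_firstEntry (continuous_gain hC) isOpen_Iio
      (measurableSet_le_and_gain_mem hX hC hσ hσ0 hHm hσ (fun _ => le_rfl) measurableSet_Iio) hρ
  set D := {ω | θ ω < ρ ω}
  -- restart at the first dip below `-ε`, on the event that it happens before `ρ`
  let σ' : Ω → ℝ := D.piecewise θ fun _ => T
  have hσ' : IsStoppingTime F fun ω => (σ' ω : WithTop ℝ) :=
    isStoppingTime_piecewise_lt hθ hρ fun ω => firstEntry_le_right.trans (hρT ω)
  have hσσ' : ∀ ω, σ ω ≤ σ' ω := fun ω => by
    by_cases hω : ω ∈ D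
    · simpa [σ', hω] using le_firstEntry (hσρ ω)
    · simpa [σ', hω] using (hσρ ω).trans (hρT ω)
  have hσ'T : ∀ ω, σ' ω < T → ω ∈ D ∧ σ' ω = θ ω := fun ω hω => by
    by_cases hωD : ω ∈ D
    · simp [σ', hωD]
    · simp [σ', hωD] at hω
  by_contra hPD
  have hPσ' : 0 < P {ω | σ' ω < T} := (pos_iff_ne_zero.2 hPD).trans_le (measure_mono
    fun ω hω => by simpa [σ', show ω ∈ D from hω] using (show θ ω < ρ ω from hω).trans_le (hρT ω))
  have hdir : IsDirection F P (fun ω => ((σ' ω : ℝ) : EReal)) H :=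
    ⟨(measurableAtTime_iff hσ').2 (hHm.mono (hσ.measurableSpace_mono hσ'
      fun ω => WithTop.coe_le_coe.2 (hσσ' ω)) le_rfl), hH.2⟩
  refine (hNOA σ' hσ' (fun ω => ⟨(hσ0 ω).trans (hσσ' ω), ?_⟩) hPσ' H hdir ε hε).ne'
    (measure_mono_null ?_ (measure_eq_zero_iff_ae_notMem.2 (hρnn.mono fun ω h => not_lt.2 h)))
  · by_cases hω : ω ∈ D
    · simpa [σ', hω] using firstEntry_le_right.trans (hρT ω)
    · simp [σ', hω]
  rintro ω ⟨hω, δ, hδ, hle⟩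
  obtain ⟨hωD, hσ'θ⟩ := hσ'T ω hω
  have hθε : gain X σ H (θ ω) ω ≤ -ε := by
    obtain h | ⟨s, hσs, hsρ, hs⟩ := firstEntry_lt_iff.1 (show θ ω < ρ ω from hωD)
    · exact absurd h (lt_irrefl _)
    · simpa [closure_Iio] using apply_firstEntry_mem_closure (O := Iio (-ε))
        (continuous_gain hC ω) ⟨s, hσs, hsρ.le, hs⟩
  have hrise := hle (ρ ω) (hσ'θ ▸ hωD.le) (hρT ω)
  rw [hσ'θ, ← gain_sub_gain (σ := σ)] at hrise
  show gain X σ H (ρ ω) ω < 0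
  linarith

theorem NOAUpTo.ae_gain_nonneg (hNOA : NOAUpTo F P X T) (hX : AdaptedProc F X)
    (hC : ContinuousPaths X) (hσ : IsStoppingTime F fun ω => (σ ω : WithTop ℝ))
    (hσ0 : ∀ ω, 0 ≤ σ ω) (hρ : IsStoppingTime F fun ω => (ρ ω : WithTop ℝ))
    (hσρ : ∀ ω, σ ω ≤ ρ ω) (hρT : ∀ ω, ρ ω ≤ T)
    (hH : IsDirection F P (fun ω => ((σ ω : ℝ) : EReal)) H)
    (hρnn : ∀ᵐ ω ∂P, 0 ≤ gain X σ H (ρ ω) ω) :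
    ∀ᵐ ω ∂P, ∀ t ∈ Icc (σ ω) (ρ ω), 0 ≤ gain X σ H t ω := by
  have hdip := ae_all_iff.2 fun n : ℕ => measure_eq_zero_iff_ae_notMem.1
    (hNOA.measure_firstEntry_lt_eq_zero hX hC hσ hσ0 hρ hσρ hρT hH hρnn
      (Nat.one_div_pos_of_nat (n := n)))
  filter_upwards [hdip, hρnn] with ω hω hρω t ht
  rcases ht.2.eq_or_lt with rfl | htρ
  · exact hρω
  by_contra! hneg
  obtain ⟨n, hn⟩ := exists_nat_one_div_lt (neg_pos.2 hneg)
  exact hω n ((firstEntry_le ht.1 (show gain X σ H t ω ∈ Iio (-(1 / ((n : ℝ) + 1))) by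
    rw [mem_Iio]; linarith)).trans_lt htρ)

theorem ae_inner_eq_zero_of_twcBounded_of_noaUpTo (hTWC : TWCBounded F P X)
    (hNOA : NOAUpTo F P X T) (hX : AdaptedProc F X) (hC : ContinuousPaths X) {τ : Ω → ℝ}
    {φ : Ω → E} (hσ : IsStoppingTime F fun ω => (σ ω : WithTop ℝ))
    (hτ : IsStoppingTime F fun ω => (τ ω : WithTop ℝ)) (hσ0 : ∀ ω, 0 ≤ σ ω)
    (hστ : ∀ ω, σ ω ≤ τ ω) (hτT : ∀ ω, τ ω ≤ T) (hφ : Measurable[hσ.measurableSpace] φ)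
    (hnn : ∀ᵐ ω ∂P, 0 ≤ ⟪φ ω, X (τ ω) ω - X (σ ω) ω⟫) :
    ∀ᵐ ω ∂P, ⟪φ ω, X (τ ω) ω - X (σ ω) ω⟫ = 0 := by
  rcases subsingleton_or_nontrivial E with hE | hE
  · exact ae_of_all _ fun ω => by simp [Subsingleton.elim (φ ω) 0]
  obtain ⟨H, ρ, hρ, hH, hρτ, hgain⟩ :=
    exists_isDirection_inner_eq_mul_gain (P := P) (X := X) hσ hτ hστ hφ
  have hρnn : ∀ᵐ ω ∂P, 0 ≤ gain X σ H (ρ ω) ω := by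
    filter_upwards [hnn] with ω hω
    rcases eq_or_ne (φ ω) 0 with h0 | h0
    · rw [(hgain ω).2 h0, gain_self]
    · rw [(hgain ω).1] at hω
      exact nonneg_of_mul_nonneg_right hω (norm_pos_iff.2 h0)
  have hnonneg := hNOA.ae_gain_nonneg hX hC hσ hσ0 hρ (fun ω => (hρτ ω).1)
    (fun ω => (hρτ ω).2.trans (hτT ω)) hH hρnn
  have htwc := (twcAt_iff hC).1 (hTWC σ hσ hσ0 ⟨T, fun ω => (hστ ω).trans (hτT ω)⟩ H hH)
  filter_upwards [hnn, hnonneg, htwc] with ω hω hnonneg hnot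
  have hρ_nonpos : gain X σ H (ρ ω) ω ≤ 0 :=
    not_lt.1 fun hpos => hnot.1 ⟨ρ ω, (hρτ ω).1, hpos, hnonneg⟩
  rw [(hgain ω).1] at hω ⊢
  exact le_antisymm (mul_nonpos_of_nonneg_of_nonpos (norm_nonneg _) hρ_nonpos) hω

theorem NoSimpleArbitrageFiniteHorizons.of_twcBounded_of_noaUpTo (hX : AdaptedProc F X)
    (hC : ContinuousPaths X) (hTWC : TWCBounded F P X)
    (hNOA : ∀ T : ℝ, 0 < T → NOAUpTo F P X T) : NoSimpleArbitrageFiniteHorizons F P X := by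
  intro T hT Φ ⟨hnn, hpos⟩
  let s : ℕ → Ω → ℝ := fun j ω => min (Φ.τ j ω) T
  have hs : ∀ j ≤ Φ.n, IsStoppingTime F fun ω => (s j ω : WithTop ℝ) := fun j hj =>
    isStoppingTime_min_of_stoppedFiltration (Φ.τ_stopping j hj)
  have hmono : ∀ i j, i ≤ j → j ≤ Φ.n → ∀ ω, s i ω ≤ s j ω := by
    intro i j hij hjn ω
    induction j, hij using Nat.le_induction with
    | base => exact le_rfl
    | succ j _ ih => exact (ih (by omega)).trans (min_le_min_right T (Φ.τ_mono j (by omega) ω))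
  have hs0 : ∀ j ≤ Φ.n, ∀ ω, 0 ≤ s j ω := fun j hj ω => by
    simpa [s, Φ.τ_zero, hT.le] using hmono 0 j (Nat.zero_le j) hj ω
  have hV := ae_sum_inner_eq_zero hs hmono
    (fun j hj => measurable_of_measurableAtTime_stoppedFiltration (Φ.τ_stopping j hj.le)
      (Φ.φ_meas j hj))
    (fun j hj => measurable_apply_stoppingTime hX hC (hs j hj) (hs0 j hj))
    (fun j hj _ hψ hψnn => ae_inner_eq_zero_of_twcBounded_of_noaUpTo hTWC (hNOA T hT) hX hC
      (hs j hj.le) (hs (j + 1) hj) (hs0 j hj.le) (hmono j (j + 1) (by omega) hj)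
      (fun _ => min_le_right _ _) hψ hψnn) Φ.n le_rfl hnn
  exact hpos.ne' (measure_eq_zero_iff_ae_notMem.2 (hV.mono fun ω h hω => hω.ne' h))

end Sufficiency

theorem statement8_general {Ω : Type*} {mΩ : MeasurableSpace Ω} (P : Measure Ω)
    (F : Filtration ℝ mΩ) (hUC : UsualConditions F P) (D : ℕ)
    (X : ℝ → Ω → EuclideanSpace ℝ (Fin D))
    (hAdapted : AdaptedProc F X) (hC : ContinuousPaths X) :
    NoSimpleArbitrageFiniteHorizons F P X ↔
      (TWCBounded F P X ∧ ∀ T : ℝ, 0 < T → NOAUpTo F P X T) := by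
  have := isRightContinuous_of_usualConditions hUC
  exact ⟨fun hNA => ⟨hNA.twcBounded hAdapted hC, fun T hT => hNA.noaUpTo hAdapted hC hT⟩,
    fun h => .of_twcBounded_of_noaUpTo hAdapted hC h.1 h.2⟩

/-- Corollary: characterization of absence of simple arbitrage on finite
time horizons for continuous processes: `X` is free of simple arbitrage on finite time
horizons iff `X` satisfies (TWC) at bounded stopping times and (NOA) on `[0,T]` holds for
every `T > 0`. -/
theorem statement8 {Ω : Type*} {mΩ : MeasurableSpace Ω} (P : Measure Ω) [IsProbabilityMeasure P]
    (F : Filtration ℝ mΩ) (hUC : UsualConditions F P) (D : ℕ)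
    (X : ℝ → Ω → EuclideanSpace ℝ (Fin D))
    (hAdapted : AdaptedProc F X) (hC : ContinuousPaths X) :
    NoSimpleArbitrageFiniteHorizons F P X ↔
      (TWCBounded F P X ∧ ∀ T : ℝ, 0 < T → NOAUpTo F P X T) :=
  statement8_general P F hUC D X hAdapted hC

end SimpleArbitrage
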